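/- arXiv:math/0702279 — 4 statements merged into one kernel-verified Lean document; each statement's English description precedes it below -/
import Mathlib

section
/- Let f : ℤ → ℕ ∪ {∞} be a function such that f⁻¹(0) is a finite set, and let φ : ℕ → ℝ be any nonnegative function with φ(x) → ∞ as x → ∞. Then there exists an asymptotic basis A of the integers such that r_A(n) = f(n) for all integers n, and such that A(-x, x) > √x / φ(x) for infinitely many positive integers x. -/
/-!
A greedy construction. Call a finite set `F` admissible if `r_F ≤ f` everywhere; the union of an
increasing chain of admissible sets is admissible. A new representation of `n` is created by
adjoining `-T` and `n + T` for huge `T`: all other new sums are far from everything seen so far,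
where `f ≠ 0` and `r_F = 0`. Density comes from adjoining a dilated, far-shifted copy of the
Erdős–Turán Sidon set `{2 p i + (i² mod p) : i < p} ⊆ [0, 2 p²)`: its `p` elements lie in an
interval of length `O(p²)`, and since all of its new sums are distinct and far away, admissibility
is preserved. As `φ → ∞`, `p > √x / φ x` for the right end `x` of the block once `p` is large.
Interleaving both steps along an enumeration of `ℤ × ℕ` gives `r_A = f`.
-/

/-- The representation function of a set `A` of integers:
`r_A(n) = card {(a,b) : a, b ∈ A, a ≤ b, a + b = n}`, valued in `ℕ∞`. -/
noncomputable def repFn (A : Set ℤ) (n : ℤ) : ℕ∞ :=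
  {p : ℤ × ℤ | p.1 ∈ A ∧ p.2 ∈ A ∧ p.1 ≤ p.2 ∧ p.1 + p.2 = n}.encard

/-- The counting function of a set `A` of integers:
`A(y, x) = card {a ∈ A : y ≤ a ≤ x}`. -/
noncomputable def countFn (A : Set ℤ) (y x : ℝ) : ℕ :=
  {a : ℤ | a ∈ A ∧ y ≤ (a : ℝ) ∧ (a : ℝ) ≤ x}.ncard

open Set Filter

def repSet (A : Set ℤ) (n : ℤ) : Set (ℤ × ℤ) :=
  {p | p.1 ∈ A ∧ p.2 ∈ A ∧ p.1 ≤ p.2 ∧ p.1 + p.2 = n}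

lemma repFn_eq_encard (A : Set ℤ) (n : ℤ) : repFn A n = (repSet A n).encard := rfl

lemma repSet_mono {A B : Set ℤ} (h : A ⊆ B) (n : ℤ) : repSet A n ⊆ repSet B n :=
  fun _ hp => ⟨h hp.1, h hp.2.1, hp.2.2⟩

lemma repFn_mono {A B : Set ℤ} (h : A ⊆ B) (n : ℤ) : repFn A n ≤ repFn B n :=
  encard_mono (repSet_mono h n)

lemma repFn_eq_zero_of_subset_Icc {A : Set ℤ} {L U m : ℤ} (hA : A ⊆ Icc L U)
    (hm : m < 2 * L ∨ 2 * U < m) : repFn A m = 0 := by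
  rw [repFn_eq_encard, encard_eq_zero, eq_empty_iff_forall_notMem]
  rintro ⟨u, v⟩ ⟨hu, hv, -, rfl⟩
  have := hA hu; have := hA hv
  simp only [mem_Icc] at *
  omega

lemma exists_natCast_le_repFn_of_le_iUnion {F : ℕ → Set ℤ} (hF : Monotone F)
    {n : ℤ} {c : ℕ} (h : (c : ℕ∞) ≤ repFn (⋃ k, F k) n) : ∃ k, (c : ℕ∞) ≤ repFn (F k) n := by
  obtain ⟨t, hts, htc⟩ := exists_subset_encard_eq h
  have ht : t.Finite := finite_of_encard_eq_coe htc
  have hcover : (ht.toFinset : Set (ℤ × ℤ)) ⊆ ⋃ k, repSet (F k) n := by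
    rintro ⟨u, v⟩ hp
    obtain ⟨hu, hv, huv⟩ := hts (ht.mem_toFinset.mp hp)
    obtain ⟨i, hi⟩ := mem_iUnion.mp hu
    obtain ⟨j, hj⟩ := mem_iUnion.mp hv
    exact mem_iUnion.mpr ⟨max i j, hF (le_max_left i j) hi, hF (le_max_right i j) hj, huv⟩
  obtain ⟨k, hk⟩ := (Monotone.directed_le fun i j hij => repSet_mono (hF hij) n)
    |>.exists_mem_subset_of_finset_subset_biUnion hcover
  exact ⟨k, htc ▸ encard_mono (ht.coe_toFinset ▸ hk)⟩

def newPairs (F G : Set ℤ) : Set (ℤ × ℤ) :=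
  {p | p.1 ∈ F ∪ G ∧ p.2 ∈ F ∪ G ∧ p.1 ≤ p.2 ∧ (p.1 ∈ G ∨ p.2 ∈ G)}

lemma repSet_union_subset (F G : Set ℤ) (m : ℤ) :
    repSet (F ∪ G) m ⊆ repSet F m ∪ {p ∈ newPairs F G | p.1 + p.2 = m} := by
  rintro ⟨u, v⟩ ⟨hu, hv, huv, rfl⟩
  by_cases hG : u ∈ G ∨ v ∈ G
  · exact Or.inr ⟨⟨hu, hv, huv, hG⟩, rfl⟩
  · rw [not_or] at hG
    exact Or.inl ⟨hu.resolve_right hG.1, hv.resolve_right hG.2, huv, rfl⟩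

lemma repFn_union_le_of_forall_ne {F G : Set ℤ} {m : ℤ}
    (h : ∀ p ∈ newPairs F G, p.1 + p.2 ≠ m) : repFn (F ∪ G) m ≤ repFn F m := by
  refine encard_mono fun p hp => ?_
  rcases repSet_union_subset F G m hp with hp | ⟨hnew, hm⟩
  exacts [hp, absurd hm (h p hnew)]

lemma repFn_union_le_add_one {F G : Set ℤ}
    (hinj : InjOn (fun p : ℤ × ℤ => p.1 + p.2) (newPairs F G)) (m : ℤ) :
    repFn (F ∪ G) m ≤ repFn F m + 1 := by
  have hsub : {p ∈ newPairs F G | p.1 + p.2 = m}.encard ≤ 1 :=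
    encard_le_one_iff.mpr fun p q hp hq => hinj hp.1 hq.1 (hp.2.trans hq.2.symm)
  calc repFn (F ∪ G) m ≤ (repSet F m ∪ {p ∈ newPairs F G | p.1 + p.2 = m}).encard :=
        encard_mono (repSet_union_subset F G m)
    _ ≤ repFn F m + 1 := (encard_union_le _ _).trans (add_le_add le_rfl hsub)

def Admissible (f : ℤ → ℕ∞) (F : Set ℤ) : Prop :=
  F.Finite ∧ ∀ m, repFn F m ≤ f m

lemma admissible_empty (f : ℤ → ℕ∞) : Admissible f ∅ :=
  ⟨finite_empty, fun m => by simp [repFn_eq_encard, repSet]⟩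

lemma Admissible.union {f : ℤ → ℕ∞} {F G : Set ℤ} (hF : Admissible f F) (hG : G.Finite)
    (hinj : InjOn (fun p : ℤ × ℤ => p.1 + p.2) (newPairs F G))
    (hroom : ∀ p ∈ newPairs F G, repFn F (p.1 + p.2) < f (p.1 + p.2)) :
    Admissible f (F ∪ G) := by
  refine ⟨hF.1.union hG, fun m => ?_⟩
  by_cases hm : ∃ p ∈ newPairs F G, p.1 + p.2 = m
  · obtain ⟨p, hp, rfl⟩ := hm
    exact (repFn_union_le_add_one hinj _).trans (Order.add_one_le_of_lt (hroom p hp))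
  · push Not at hm
    exact (repFn_union_le_of_forall_ne hm).trans (hF.2 m)

lemma injOn_newPairs_singleton (F : Set ℤ) (g : ℤ) :
    InjOn (fun p : ℤ × ℤ => p.1 + p.2) (newPairs F {g}) := by
  rintro ⟨u, v⟩ ⟨-, -, huv, hg⟩ ⟨u', v'⟩ ⟨-, -, huv', hg'⟩ h
  simp only [mem_singleton_iff] at hg hg' h
  ext <;> dsimp only <;> omega

lemma exists_add_of_mem_newPairs_singleton {F : Set ℤ} {g : ℤ} {p : ℤ × ℤ}
    (hp : p ∈ newPairs F {g}) : ∃ x ∈ F ∪ {g}, p.1 + p.2 = x + g := by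
  obtain ⟨h1, h2, -, rfl | rfl⟩ := hp
  exacts [⟨p.2, h2, add_comm _ _⟩, ⟨p.1, h1, rfl⟩]

lemma exists_subset_Icc_neg_self {s : Set ℤ} (hs : s.Finite) :
    ∃ B : ℤ, 0 ≤ B ∧ s ⊆ Icc (-B) B := by
  obtain ⟨U, hU⟩ := hs.bddAbove
  obtain ⟨L, hL⟩ := hs.bddBelow
  refine ⟨max (max U (-L)) 0, le_max_right _ _, fun z hz => ⟨?_, ?_⟩⟩
  · linarith [hL hz, le_max_left (max U (-L)) 0, le_max_right U (-L)]
  · linarith [hU hz, le_max_left (max U (-L)) 0, le_max_left U (-L)]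

lemma repFn_lt_of_subset_Icc {f : ℤ → ℕ∞} {A : Set ℤ} {L U m : ℤ} (hA : A ⊆ Icc L U)
    (hm : m < 2 * L ∨ 2 * U < m) (hfm : f m ≠ 0) : repFn A m < f m := by
  rw [repFn_eq_zero_of_subset_Icc hA hm]
  exact pos_iff_ne_zero.mpr hfm

lemma Admissible.union_singleton {f : ℤ → ℕ∞} {F : Set ℤ} {g : ℤ} (hF : Admissible f F)
    (hroom : ∀ x ∈ F ∪ {g}, repFn F (x + g) < f (x + g)) : Admissible f (F ∪ {g}) :=
  hF.union (finite_singleton g) (injOn_newPairs_singleton F g) fun _ hp => by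
    obtain ⟨x, hx, hsum⟩ := exists_add_of_mem_newPairs_singleton hp
    exact hsum ▸ hroom x hx

lemma repFn_union_singleton_le {F : Set ℤ} {g m : ℤ} (h : ∀ x ∈ F ∪ {g}, x + g ≠ m) :
    repFn (F ∪ {g}) m ≤ repFn F m :=
  repFn_union_le_of_forall_ne fun _ hp => by
    obtain ⟨x, hx, hsum⟩ := exists_add_of_mem_newPairs_singleton hp
    exact hsum ▸ h x hx

/-- Adding `-T` and `n + T` for a huge `T` creates the new representation `n = (-T) + (n + T)`,
and every other new sum is far from all previous sums and from the zeros of `f`. -/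
lemma Admissible.exists_repFn_add_one_le {f : ℤ → ℕ∞} {F : Set ℤ} (hF : Admissible f F)
    (hZ : {m | f m = 0}.Finite) {n : ℤ} (hn : repFn F n < f n) :
    ∃ F', F ⊆ F' ∧ Admissible f F' ∧ repFn F n + 1 ≤ repFn F' n := by
  obtain ⟨B, hB0, hB⟩ := exists_subset_Icc_neg_self (hF.1.union hZ)
  have hFB : F ⊆ Icc (-B) B := subset_union_left.trans hB
  have hf0 : ∀ m, m < -B ∨ B < m → f m ≠ 0 := fun m hm h0 => by
    have := hB (Or.inr h0); simp only [mem_Icc] at this; omega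
  set a := -(3 * B + n.natAbs + 1)
  set b := n + (3 * B + n.natAbs + 1)
  have hsum_a : ∀ x ∈ F ∪ {a}, x + a < -2 * B ∧ x + a < n := fun x hx => by
    rcases hx with hx | rfl
    · have := hFB hx; simp only [mem_Icc] at this
      constructor <;> omega
    · constructor <;> omega
  have hF₁ : Admissible f (F ∪ {a}) := hF.union_singleton fun x hx =>
    repFn_lt_of_subset_Icc hFB (Or.inl (by linarith [hsum_a x hx]))
      (hf0 _ (Or.inl (by linarith [hsum_a x hx])))
  have hn₁ : repFn (F ∪ {a}) n ≤ repFn F n :=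
    repFn_union_singleton_le fun x hx => (hsum_a x hx).2.ne
  have hF₁B : F ∪ {a} ⊆ Icc a B := by
    rintro x (hx | rfl)
    · have := hFB hx; simp only [mem_Icc] at this ⊢; omega
    · simp only [mem_Icc]; omega
  have hF₂ : Admissible f (F ∪ {a} ∪ {b}) := hF₁.union_singleton fun x hx => by
    rcases eq_or_ne x a with hxa | hxa
    · rw [hxa, show a + b = n by simp only [a, b]; ring]
      exact hn₁.trans_lt hn
    · have hx : 2 * B < x + b := by
        rcases hx with (hx | hx) | rfl
        · have := hFB hx; simp only [mem_Icc] at this; omega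
        · exact absurd hx hxa
        · omega
      exact repFn_lt_of_subset_Icc hF₁B (Or.inr hx) (hf0 _ (by omega))
  refine ⟨F ∪ {a} ∪ {b}, subset_union_left.trans subset_union_left, hF₂, ?_⟩
  have hab : (a, b) ∉ repSet F n := fun h => by
    have := hFB h.1; simp only [mem_Icc] at this; omega
  calc repFn F n + 1 = (insert (a, b) (repSet F n)).encard := (encard_insert_of_notMem hab).symm
    _ ≤ repFn (F ∪ {a} ∪ {b}) n := by
      refine encard_mono (insert_subset ⟨by simp, by simp, ?_, by ring⟩ (repSet_mono ?_ n))
      · dsimp only; omega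
      · exact subset_union_left.trans subset_union_left

lemma Admissible.exists_natCast_le_repFn {f : ℤ → ℕ∞} {F : Set ℤ} (hF : Admissible f F)
    (hZ : {m | f m = 0}.Finite) (n : ℤ) (c : ℕ) :
    ∃ F', F ⊆ F' ∧ Admissible f F' ∧ ((c : ℕ∞) ≤ f n → (c : ℕ∞) ≤ repFn F' n) := by
  induction c with
  | zero => exact ⟨F, subset_rfl, hF, fun _ => by simp⟩
  | succ c ih =>
    obtain ⟨F₁, h₁, hF₁, hc₁⟩ := ih
    by_cases hlt : repFn F₁ n < f n
    · obtain ⟨F₂, h₂, hF₂, hrep⟩ := hF₁.exists_repFn_add_one_le hZ hlt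
      refine ⟨F₂, h₁.trans h₂, hF₂, fun hc => ?_⟩
      push_cast at hc ⊢
      exact (add_le_add_left (hc₁ ((le_add_right le_rfl).trans hc)) 1).trans hrep
    · exact ⟨F₁, h₁, hF₁, fun hc => hc.trans (not_lt.mp hlt)⟩

def IsSidon (S : Set ℤ) : Prop :=
  ∀ a ∈ S, ∀ b ∈ S, ∀ c ∈ S, ∀ d ∈ S, a + b = c + d → a = c ∧ b = d ∨ a = d ∧ b = c

lemma IsSidon.image_affine {S : Set ℤ} (hS : IsSidon S) (N : ℤ) {c : ℤ} (hc : c ≠ 0) :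
    IsSidon ((fun s => N + c * s) '' S) := by
  rintro _ ⟨a, ha, rfl⟩ _ ⟨b, hb, rfl⟩ _ ⟨a', ha', rfl⟩ _ ⟨b', hb', rfl⟩ h
  have : a + b = a' + b' := mul_left_cancel₀ hc (by linarith)
  rcases hS a ha b hb a' ha' b' hb' this with ⟨rfl, rfl⟩ | ⟨rfl, rfl⟩ <;> simp

def erdosTuran (p i : ℕ) : ℕ := 2 * p * i + i ^ 2 % p

lemma erdosTuran_strictMono {p : ℕ} (hp : 0 < p) : StrictMono (erdosTuran p) :=
  strictMono_nat_of_lt_succ fun i => by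
    have := Nat.mod_lt (i ^ 2) hp
    unfold erdosTuran
    rw [mul_add]
    omega

lemma erdosTuran_lt {p i : ℕ} (hi : i < p) : erdosTuran p i < 2 * p ^ 2 := by
  have := Nat.mod_lt (i ^ 2) (i.zero_le.trans_lt hi)
  have : 2 * p * i + 2 * p ≤ 2 * p * p := by rw [← mul_add_one]; exact Nat.mul_le_mul_left _ hi
  unfold erdosTuran
  nlinarith

lemma erdosTuran_add_eq {p : ℕ} (hp : p.Prime) (hp2 : p ≠ 2) {i j k l : ℕ}
    (hi : i < p) (hj : j < p) (hk : k < p)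
    (h : erdosTuran p i + erdosTuran p j = erdosTuran p k + erdosTuran p l) :
    i = k ∧ j = l ∨ i = l ∧ j = k := by
  have := Fact.mk hp
  -- read `u + v` and `u² % p + v² % p` off as the base-`2p` digits of the sum
  have digits : ∀ u v : ℕ, (erdosTuran p u + erdosTuran p v) / (2 * p) = u + v ∧
      (erdosTuran p u + erdosTuran p v) % (2 * p) = u ^ 2 % p + v ^ 2 % p := fun u v => by
    refine (Nat.div_mod_unique (by positivity [hp.pos])).mpr ⟨by unfold erdosTuran; ring, ?_⟩
    have := Nat.mod_lt (u ^ 2) hp.pos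
    have := Nat.mod_lt (v ^ 2) hp.pos
    omega
  have hs : i + j = k + l := by rw [← (digits i j).1, h, (digits k l).1]
  have hq : i ^ 2 % p + j ^ 2 % p = k ^ 2 % p + l ^ 2 % p := by
    rw [← (digits i j).2, h, (digits k l).2]
  have hs' : (i : ZMod p) + j = k + l := by exact_mod_cast congrArg (Nat.cast : ℕ → ZMod p) hs
  have hq' : (i : ZMod p) ^ 2 + j ^ 2 = k ^ 2 + l ^ 2 := by
    have := congrArg (Nat.cast : ℕ → ZMod p) hq
    push_cast [ZMod.natCast_mod] at this
    exact this
  have h2 : (2 : ZMod p) ≠ 0 := Ring.two_ne_zero (by rwa [ZMod.ringChar_zmod_n])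
  have hroot : ((k : ZMod p) - i) * (k - j) = 0 :=
    mul_left_cancel₀ h2 (by linear_combination (↑i + ↑j - ↑k + ↑l : ZMod p) * hs' - hq')
  have lift : ∀ u v : ℕ, u < p → v < p → (u : ZMod p) = v → u = v := fun u v hu hv huv => by
    rwa [ZMod.natCast_eq_natCast_iff', Nat.mod_eq_of_lt hu, Nat.mod_eq_of_lt hv] at huv
  rcases mul_eq_zero.mp hroot with h | h
  · have := lift k i hk hi (sub_eq_zero.mp h); omega
  · have := lift k j hk hj (sub_eq_zero.mp h); omega

def erdosTuranSet (p : ℕ) : Finset ℤ :=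
  (Finset.range p).image fun i => (erdosTuran p i : ℤ)

lemma isSidon_erdosTuranSet {p : ℕ} (hp : p.Prime) (hp2 : p ≠ 2) :
    IsSidon (erdosTuranSet p : Set ℤ) := by
  simp only [IsSidon, erdosTuranSet, Finset.coe_image, Finset.coe_range, mem_image, mem_Iio]
  rintro _ ⟨i, hi, rfl⟩ _ ⟨j, hj, rfl⟩ _ ⟨k, hk, rfl⟩ _ ⟨l, hl, rfl⟩ h
  have h' : erdosTuran p i + erdosTuran p j = erdosTuran p k + erdosTuran p l := by exact_mod_cast h
  rcases erdosTuran_add_eq hp hp2 hi hj hk h' with ⟨rfl, rfl⟩ | ⟨rfl, rfl⟩ <;> simp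

lemma card_erdosTuranSet {p : ℕ} (hp : 0 < p) : (erdosTuranSet p).card = p := by
  have hinj : Function.Injective fun i => (erdosTuran p i : ℤ) :=
    Nat.cast_injective.comp (erdosTuran_strictMono hp).injective
  rw [erdosTuranSet, Finset.card_image_of_injective _ hinj, Finset.card_range]

lemma erdosTuranSet_subset_Ico (p : ℕ) : (erdosTuranSet p : Set ℤ) ⊆ Ico 0 (2 * p ^ 2) := by
  simp only [erdosTuranSet, Finset.coe_image, Finset.coe_range]
  rintro _ ⟨i, hi, rfl⟩
  exact ⟨by positivity, Nat.cast_lt.mpr (erdosTuran_lt hi)⟩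

lemma injOn_sum_newPairs_of_isSidon {F G : Set ℤ} {B N M : ℤ} (hF : F ⊆ Icc (-B) B)
    (hG : G ⊆ Icc N M) (hS : IsSidon G) (hsep : ∀ g ∈ G, ∀ g' ∈ G, g < g' → g + 2 * B < g')
    (hN : B < N) (hM : M + B < 2 * N) :
    InjOn (fun p : ℤ × ℤ => p.1 + p.2) (newPairs F G) := by
  have hFG : ∀ x ∈ F, ∀ g ∈ G, x < g := fun x hx g hg => by
    have := hF hx; have := hG hg; simp only [mem_Icc] at *; omega
  have classify : ∀ p ∈ newPairs F G, (p.1 ∈ F ∧ p.2 ∈ G ∧ p.1 + p.2 < 2 * N) ∨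
      (p.1 ∈ G ∧ p.2 ∈ G ∧ 2 * N ≤ p.1 + p.2) := by
    rintro ⟨u, v⟩ ⟨hu, hv, huv, hnew⟩
    dsimp only at *
    have hvG : v ∈ G := hnew.elim (fun huG => hv.resolve_left fun hvF => by
      linarith [hFG v hvF u huG]) id
    have := hG hvG; simp only [mem_Icc] at this
    rcases hu with huF | huG
    · have := hF huF; simp only [mem_Icc] at this
      exact Or.inl ⟨huF, hvG, by omega⟩
    · have := hG huG; simp only [mem_Icc] at this
      exact Or.inr ⟨huG, hvG, by omega⟩
  rintro ⟨u, v⟩ hp ⟨u', v'⟩ hq (h : u + v = u' + v')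
  have huv := hp.2.2.1
  have huv' := hq.2.2.1
  dsimp only at huv huv'
  rcases classify _ hp with ⟨hu, hv, hlt⟩ | ⟨hu, hv, hge⟩ <;>
    rcases classify _ hq with ⟨hu', hv', hlt'⟩ | ⟨hu', hv', hge'⟩ <;>
    dsimp only at * <;> try omega
  · have := hF hu; have := hF hu'; simp only [mem_Icc] at *
    rcases lt_trichotomy v v' with hvv | rfl | hvv
    · linarith [hsep v hv v' hv' hvv]
    · exact Prod.ext (by omega) rfl
    · linarith [hsep v' hv' v hv hvv]
  · rcases hS u hu v hv u' hu' v' hv' h with ⟨rfl, rfl⟩ | ⟨rfl, rfl⟩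
    · rfl
    · ext <;> dsimp only <;> omega

lemma Admissible.exists_union_sidon_copy {f : ℤ → ℕ∞} {F : Set ℤ} (hF : Admissible f F)
    {B : ℤ} (hB0 : 0 ≤ B) (hB : F ∪ {m | f m = 0} ⊆ Icc (-B) B) {S : Finset ℤ}
    (hS : IsSidon (S : Set ℤ)) {L : ℤ} (hL : 0 < L) (hSL : (S : Set ℤ) ⊆ Ico 0 L) :
    ∃ (G : Set ℤ) (x : ℤ), Admissible f (F ∪ G) ∧ G.ncard = S.card ∧ G ⊆ Icc 0 x ∧
      L ≤ x ∧ x ≤ (7 * B + 3) * L := by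
  have hFB : F ⊆ Icc (-B) B := subset_union_left.trans hB
  set c := 2 * B + 1
  set N := c * L + 3 * B + 1
  set G := (fun s => N + c * s) '' (S : Set ℤ)
  have hGN : G ⊆ Icc N (N + c * L) := by
    rintro _ ⟨s, hs, rfl⟩
    have := hSL hs; simp only [mem_Ico] at this
    exact ⟨by nlinarith, by nlinarith⟩
  have hsep : ∀ g ∈ G, ∀ g' ∈ G, g < g' → g + 2 * B < g' := by
    rintro _ ⟨s, -, rfl⟩ _ ⟨s', -, rfl⟩ h
    have : s + 1 ≤ s' := by by_contra! h'; nlinarith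
    nlinarith
  have hinj := injOn_sum_newPairs_of_isSidon hFB hGN (hS.image_affine N (by omega)) hsep
    (by nlinarith) (by nlinarith)
  -- every new sum is at least `N - B > 2 B`, beyond the sums of `F` and the zeros of `f`
  have hroom : ∀ p ∈ newPairs F G, repFn F (p.1 + p.2) < f (p.1 + p.2) := by
    rintro ⟨u, v⟩ ⟨hu, hv, huv, hnew⟩
    have hlow : ∀ w ∈ F ∪ G, -B ≤ w := fun w hw => hw.elim (fun h => (hFB h).1)
      fun h => by linarith [(hGN h).1, show B < N by nlinarith]
    have hbig : N ≤ v := hnew.elim (fun h => (hGN h).1.trans huv) fun h => (hGN h).1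
    have hsum : 2 * B < u + v := by linarith [hlow u hu, show 3 * B < N by nlinarith]
    refine repFn_lt_of_subset_Icc hFB (Or.inr hsum) fun h0 => ?_
    have := hB (Or.inr h0); simp only [mem_Icc] at this; omega
  refine ⟨G, N + c * L, hF.union ((S.finite_toSet).image _) hinj hroom, ?_, ?_, ?_, ?_⟩
  · rw [ncard_image_of_injective _ fun s s' h => by simpa [show c ≠ 0 by omega] using h,
      ncard_coe_finset]
  · exact hGN.trans (Icc_subset_Icc (by nlinarith) le_rfl)
  · nlinarith
  · nlinarith

lemma ncard_le_countFn {A G : Set ℤ} {y x : ℝ} (hGA : G ⊆ A)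
    (hG : ∀ g ∈ G, y ≤ (g : ℝ) ∧ (g : ℝ) ≤ x) : G.ncard ≤ countFn A y x :=
  ncard_le_ncard (fun g hg => ⟨hGA hg, hG g hg⟩) ((finite_Icc ⌈y⌉ ⌊x⌋).subset
    fun _ ha => ⟨Int.ceil_le.mpr ha.2.1, Int.le_floor.mpr ha.2.2⟩)

lemma countFn_mono {A A' : Set ℤ} (h : A ⊆ A') (y x : ℝ) : countFn A y x ≤ countFn A' y x :=
  ncard_le_countFn (fun _ ha => h ha.1) fun _ ha => ha.2

lemma sqrt_div_lt_of_le_mul_sq {x K p t : ℝ} (hK : 0 ≤ K) (hp : 0 < p) (hx : x ≤ K * p ^ 2)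
    (ht : √K + 1 ≤ t) : √x / t < p := by
  have hK' := Real.sqrt_nonneg K
  rw [div_lt_iff₀ (by linarith)]
  calc √x ≤ √(K * p ^ 2) := Real.sqrt_le_sqrt hx
    _ = √K * p := by rw [Real.sqrt_mul hK, Real.sqrt_sq hp.le]
    _ < p * (√K + 1) := by linarith
    _ ≤ p * t := mul_le_mul_of_nonneg_left ht hp.le

lemma Admissible.exists_dense {f : ℤ → ℕ∞} {F : Set ℤ} (hF : Admissible f F)
    (hZ : {m | f m = 0}.Finite) {φ : ℕ → ℝ} (hφ : Tendsto φ atTop atTop) (N₀ : ℕ) :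
    ∃ F', F ⊆ F' ∧ Admissible f F' ∧
      ∃ x : ℕ, N₀ < x ∧ √x / φ x < (countFn F' (-(x : ℝ)) x : ℝ) := by
  obtain ⟨B, hB0, hB⟩ := exists_subset_Icc_neg_self (hF.1.union hZ)
  obtain ⟨X₀, hX₀⟩ := eventually_atTop.mp (hφ.eventually_ge_atTop (√((7 * B + 3) * 2 : ℝ) + 1))
  obtain ⟨p, hpX, hp⟩ := Nat.exists_infinite_primes (max X₀ (N₀ + 3))
  have hp3 : 3 ≤ p := le_of_max_le_right hpX |>.trans' (by omega)
  obtain ⟨G, x, hFG, hGcard, hGx, hLx, hxL⟩ := hF.exists_union_sidon_copy hB0 hB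
    (isSidon_erdosTuranSet hp (by omega)) (by positivity) (erdosTuranSet_subset_Ico p)
  have hpx : (p : ℤ) ≤ x := by
    have : (p : ℤ) ≤ 2 * p ^ 2 := by nlinarith
    exact_mod_cast this.trans hLx
  lift x to ℕ using by omega
  refine ⟨F ∪ G, subset_union_left, hFG, x, by omega, ?_⟩
  calc √x / φ x < p := by
        have hB0' : (0 : ℝ) ≤ B := by exact_mod_cast hB0
        have hxK : (x : ℝ) ≤ (7 * B + 3) * 2 * (p : ℝ) ^ 2 := by
          rw [mul_assoc]; exact_mod_cast hxL
        refine sqrt_div_lt_of_le_mul_sq (by positivity) (by positivity) hxK ?_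
        exact hX₀ x ((le_of_max_le_left hpX).trans (by exact_mod_cast hpx))
    _ = G.ncard := by rw [hGcard, card_erdosTuranSet hp.pos]
    _ ≤ countFn (F ∪ G) (-(x : ℝ)) x := by
        refine Nat.cast_le.mpr (ncard_le_countFn subset_union_right fun g hg => ?_)
        have := hGx hg; simp only [mem_Icc] at this
        have hg0 : (0 : ℝ) ≤ g := by exact_mod_cast this.1
        exact ⟨by linarith, by exact_mod_cast this.2⟩

/-- Stage `k` serves the `k`-th pair `(n, c)` of an enumeration of `ℤ × ℕ`, then appends a dense
block beyond `k`. -/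
lemma exists_admissible_seq {f : ℤ → ℕ∞} (hZ : {m | f m = 0}.Finite) {φ : ℕ → ℝ}
    (hφ : Tendsto φ atTop atTop) :
    ∃ F : ℕ → Set ℤ, Monotone F ∧ (∀ k, Admissible f (F k)) ∧
      (∀ (n : ℤ) (c : ℕ), (c : ℕ∞) ≤ f n → ∃ k, (c : ℕ∞) ≤ repFn (F k) n) ∧
      ∀ N₀ : ℕ, ∃ k, ∃ x : ℕ, N₀ < x ∧ √x / φ x < (countFn (F k) (-(x : ℝ)) x : ℝ) := by
  obtain ⟨e, he⟩ := exists_surjective_nat (ℤ × ℕ)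
  have step : ∀ (k : ℕ) (F : {F // Admissible f F}), ∃ F' : {F // Admissible f F},
      F.1 ⊆ F'.1 ∧ (((e k).2 : ℕ∞) ≤ f (e k).1 → ((e k).2 : ℕ∞) ≤ repFn F'.1 (e k).1) ∧
      ∃ x : ℕ, k < x ∧ √x / φ x < (countFn F'.1 (-(x : ℝ)) x : ℝ) := by
    rintro k ⟨F, hF⟩
    obtain ⟨F₁, h₁, hF₁, hc⟩ := hF.exists_natCast_le_repFn hZ (e k).1 (e k).2
    obtain ⟨F₂, h₂, hF₂, hx⟩ := hF₁.exists_dense hZ hφ k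
    exact ⟨⟨F₂, hF₂⟩, h₁.trans h₂, fun h => (hc h).trans (repFn_mono h₂ _), hx⟩
  choose next hnext using step
  let F : ℕ → {F // Admissible f F} := fun k => Nat.rec ⟨∅, admissible_empty f⟩ next k
  refine ⟨fun k => (F k).1, monotone_nat_of_le_succ fun k => (hnext k (F k)).1, fun k => (F k).2,
    fun n c hc => ?_, fun N₀ => ⟨N₀ + 1, (hnext N₀ (F N₀)).2.2⟩⟩
  obtain ⟨k, hk⟩ := he (n, c)
  exact ⟨k + 1, by simpa only [hk] using (hnext k (F k)).2.1 (by simpa only [hk] using hc)⟩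

theorem stmt_0_general (f : ℤ → ℕ∞) (hf : {n : ℤ | f n = 0}.Finite)
    (φ : ℕ → ℝ)
    (hφ : Filter.Tendsto φ Filter.atTop Filter.atTop) :
    ∃ A : Set ℤ,
      {n : ℤ | ¬ 1 ≤ repFn A n}.Finite ∧
      (∀ n : ℤ, repFn A n = f n) ∧
      {x : ℕ | 0 < x ∧
        Real.sqrt x / φ x < (countFn A (-(x : ℝ)) (x : ℝ) : ℝ)}.Infinite := by
  obtain ⟨F, hmono, hadm, hlow, hdense⟩ := exists_admissible_seq hf hφ
  have hrep : ∀ n, repFn (⋃ k, F k) n = f n := fun n =>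
    ENat.eq_of_forall_natCast_le_iff fun c => ⟨fun h => by
      obtain ⟨k, hk⟩ := exists_natCast_le_repFn_of_le_iUnion hmono h
      exact hk.trans ((hadm k).2 n), fun h => by
      obtain ⟨k, hk⟩ := hlow n c h
      exact hk.trans (repFn_mono (subset_iUnion F k) n)⟩
  refine ⟨⋃ k, F k, by simpa [hrep, Order.one_le_iff_ne_zero] using hf, hrep,
    infinite_of_forall_exists_gt fun N₀ => ?_⟩
  obtain ⟨k, x, hx, hdens⟩ := hdense N₀
  refine ⟨x, ⟨by omega, hdens.trans_le ?_⟩, hx⟩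
  exact_mod_cast countFn_mono (subset_iUnion F k) _ _

theorem stmt_0 (f : ℤ → ℕ∞) (hf : {n : ℤ | f n = 0}.Finite)
    (φ : ℕ → ℝ) (hφ0 : ∀ x, 0 ≤ φ x)
    (hφ : Filter.Tendsto φ Filter.atTop Filter.atTop) :
    ∃ A : Set ℤ,
      {n : ℤ | ¬ 1 ≤ repFn A n}.Finite ∧
      (∀ n : ℤ, repFn A n = f n) ∧
      {x : ℕ | 0 < x ∧
        Real.sqrt x / φ x < (countFn A (-(x : ℝ)) (x : ℝ) : ℝ)}.Infinite :=
  stmt_0_general f hf φ hφ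
end

section
/- Let f : ℤ → ℕ ∪ {∞} be a function such that f⁻¹(0) is a finite set. Let A be a finite set of integers with r_A(n) ≤ f(n) for all integers n and 0 ∉ A. Let φ : ℕ → ℝ be a nonnegative function such that φ(x) → ∞ as x → ∞. Then for any M > 0, there exists an integer x > M and a finite set of integers B with 0 ∉ B, A ⊆ B, r_B(n) ≤ f(n) for all integers n, and B(-x, x) > √x / φ(x). -/
set_option maxHeartbeats 1000000 in

lemma et_sidon (p : ℕ) (hp : p.Prime) (hp2 : 2 < p)
    {i j k l : ℕ} (hi : i < p) (hj : j < p) (hk : k < p) (hl : l < p)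
    (h : (2*p*i + i^2 % p) + (2*p*j + j^2 % p) = (2*p*k + k^2 % p) + (2*p*l + l^2 % p)) :
    (i = k ∧ j = l) ∨ (i = l ∧ j = k) := by
  haveI : Fact p.Prime := ⟨hp⟩
  have hp0 : 0 < p := hp.pos
  have hpp : 0 < 2*p := by omega
  have hri : i^2 % p < p := Nat.mod_lt _ hp0
  have hrj : j^2 % p < p := Nat.mod_lt _ hp0
  have hrk : k^2 % p < p := Nat.mod_lt _ hp0
  have hrl : l^2 % p < p := Nat.mod_lt _ hp0
  have h' : 2*p*(i+j) + (i^2%p + j^2%p) = 2*p*(k+l) + (k^2%p + l^2%p) := by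
    rw [Nat.mul_add, Nat.mul_add]
    linarith [h]
  have e1 : (2*p*(i+j) + (i^2%p + j^2%p)) / (2*p) = i+j := by
    rw [Nat.mul_add_div hpp, Nat.div_eq_of_lt (by omega), Nat.add_zero]
  have e2 : (2*p*(k+l) + (k^2%p + l^2%p)) / (2*p) = k+l := by
    rw [Nat.mul_add_div hpp, Nat.div_eq_of_lt (by omega), Nat.add_zero]
  have q1 : i + j = k + l := by rw [← e1, ← e2, h']
  have q2 : i^2%p + j^2%p = k^2%p + l^2%p := by
    rw [q1] at h'; exact Nat.add_left_cancel h'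
  have cast2 : ((i:ZMod p)^2 + (j:ZMod p)^2 = (k:ZMod p)^2 + (l:ZMod p)^2) := by
    have h2 := congrArg (fun t : ℕ => (t : ZMod p)) q2
    push_cast [ZMod.natCast_mod] at h2
    exact h2
  have cast1 : (i:ZMod p) + j = (k:ZMod p) + l := by
    exact_mod_cast congrArg (fun t : ℕ => (t : ZMod p)) q1
  have two_ne : (2 : ZMod p) ≠ 0 := by
    intro h2
    have hd : (p:ℕ) ∣ 2 := by
      have : ((2:ℕ) : ZMod p) = 0 := by exact_mod_cast h2
      exact (ZMod.natCast_eq_zero_iff 2 p).mp this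
    have := Nat.le_of_dvd (by norm_num) hd
    omega
  have hij : (i:ZMod p) * j = (k:ZMod p) * l := by
    have h2 : (2:ZMod p) * ((i:ZMod p)*j) = 2 * ((k:ZMod p)*l) := by
      linear_combination ((i:ZMod p)+j+k+l) * cast1 - cast2
    exact mul_left_cancel₀ two_ne h2
  have hroot : ((i:ZMod p) - k) * ((i:ZMod p) - l) = 0 := by
    linear_combination (i:ZMod p) * cast1 - hij
  have hcast_inj : ∀ a b : ℕ, a < p → b < p → (a:ZMod p) = b → a = b := by
    intro a b ha hb hab
    have := congrArg ZMod.val hab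
    rwa [ZMod.val_cast_of_lt ha, ZMod.val_cast_of_lt hb] at this
  rcases mul_eq_zero.mp hroot with h0 | h0
  · have hik : i = k := hcast_inj _ _ hi hk (by linear_combination h0)
    exact Or.inl ⟨hik, by omega⟩
  · have hil : i = l := hcast_inj _ _ hi hl (by linear_combination h0)
    exact Or.inr ⟨hil, by omega⟩

set_option maxHeartbeats 1000000 in
theorem stmt_2 (f : ℤ → ℕ∞) (hf : {n : ℤ | f n = 0}.Finite)
    (A : Set ℤ) (hA : A.Finite) (hA0 : (0 : ℤ) ∉ A)
    (hAf : ∀ n : ℤ, repFn A n ≤ f n)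
    (φ : ℕ → ℝ) (hφ0 : ∀ x, 0 ≤ φ x)
    (hφ : Filter.Tendsto φ Filter.atTop Filter.atTop)
    (M : ℝ) (hM : 0 < M) :
    ∃ x : ℕ, ∃ B : Set ℤ, M < (x : ℝ) ∧ B.Finite ∧ (0 : ℤ) ∉ B ∧ A ⊆ B ∧
      (∀ n : ℤ, repFn B n ≤ f n) ∧
      Real.sqrt x / φ x < (countFn B (-(x : ℝ)) (x : ℝ) : ℝ) := by
  classical
  -- A bound K on |a| for a ∈ A and |n| for n with f n = 0
  have hfin : (A ∪ {n : ℤ | f n = 0}).Finite := hA.union hf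
  obtain ⟨K0, hK0⟩ := (hfin.image abs).bddAbove
  set K : ℤ := max K0 0 with hKdef
  have hK1 : 0 ≤ K := le_max_right _ _
  have hKA : ∀ a ∈ A, |a| ≤ K := by
    intro a ha
    exact le_trans (hK0 (Set.mem_image_of_mem _ (Set.mem_union_left _ ha))) (le_max_left _ _)
  have hKF : ∀ n : ℤ, f n = 0 → |n| ≤ K := by
    intro n hn
    exact le_trans (hK0 (Set.mem_image_of_mem _ (Set.mem_union_right _ hn))) (le_max_left _ _)
  set c : ℤ := 2*K + 1 with hcdef
  have hc1 : 1 ≤ c := by omega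
  set Cq : ℤ := c * (K + 5) with hCdef
  have hCpos : 0 < Cq := by nlinarith
  obtain ⟨P, hP⟩ := Filter.eventually_atTop.mp (hφ.eventually_ge_atTop (Real.sqrt (Cq:ℝ) + 1))
  obtain ⟨p, hple, hpprime⟩ :=
    Nat.exists_infinite_primes (max (max P (⌈M⌉₊ + 1)) (max (K.toNat + 1) 3))
  have hpP : P ≤ p := le_trans (le_trans (le_max_left _ _) (le_max_left _ _)) hple
  have hpM : ⌈M⌉₊ + 1 ≤ p := le_trans (le_trans (le_max_right _ _) (le_max_left _ _)) hple
  have hpK : K.toNat + 1 ≤ p := le_trans (le_trans (le_max_left _ _) (le_max_right _ _)) hple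
  have hp3 : 3 ≤ p := le_trans (le_trans (le_max_right _ _) (le_max_right _ _)) hple
  have hp0 : 0 < p := by omega
  have hp1z : 1 ≤ (p:ℤ) := by exact_mod_cast hp0
  have hKp : K + 1 ≤ (p:ℤ) := by
    have h1 : ((K.toNat + 1 : ℕ) : ℤ) ≤ (p:ℤ) := by exact_mod_cast hpK
    push_cast at h1
    rwa [Int.toNat_of_nonneg hK1] at h1
  set T : ℤ := 2*(p:ℤ)^2 + K + 1 with hTdef
  set N : ℤ := c * (T + 2*(p:ℤ)^2) with hNdef
  have hN' : N = c*T + 2*c*(p:ℤ)^2 := by rw [hNdef]; ring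
  set aZ : ℕ → ℤ := fun i => ((2*p*i + i^2 % p : ℕ) : ℤ) with haZdef
  set sFn : ℕ → ℤ := fun i => c * (T + aZ i) with hsdef
  have haZ0 : ∀ i, 0 ≤ aZ i := fun i => Int.natCast_nonneg _
  have haZub : ∀ i, i < p → aZ i ≤ 2*(p:ℤ)^2 := by
    intro i hi
    have h2 : i^2 % p < p := Nat.mod_lt _ hp0
    have h1 : 2*p*i + i^2 % p ≤ 2*p^2 := by nlinarith
    have h3 : ((2*p*i + i^2 % p : ℕ):ℤ) ≤ ((2*p^2 : ℕ):ℤ) := by exact_mod_cast h1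
    simp only [haZdef]
    calc ((2*p*i + i^2 % p : ℕ):ℤ) ≤ ((2*p^2 : ℕ):ℤ) := h3
    _ = 2*(p:ℤ)^2 := by push_cast; ring
  have hs_lb : ∀ i, c*T ≤ sFn i := by
    intro i
    have h1 := haZ0 i
    have : c * T ≤ c * (T + aZ i) := by
      apply mul_le_mul_of_nonneg_left (by linarith) (by omega)
    simpa [hsdef] using this
  have hs_ub : ∀ i, i < p → sFn i ≤ N := by
    intro i hi
    have h1 := haZub i hi
    have : c * (T + aZ i) ≤ c * (T + 2*(p:ℤ)^2) := by
      apply mul_le_mul_of_nonneg_left (by linarith) (by omega)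
    simpa [hsdef, hNdef] using this
  have hT_ge : K + 3 ≤ T := by nlinarith
  have hcT : 3*K < c*T := by
    nlinarith [mul_le_mul_of_nonneg_left hT_ge (by omega : (0:ℤ) ≤ c)]
  have hTm : K < c*T - 2*c*(p:ℤ)^2 := by
    have h : c*T - 2*c*(p:ℤ)^2 = c*(K+1) := by rw [hTdef]; ring
    rw [h]; nlinarith
  set Sfin : Finset ℤ := (Finset.range p).image sFn with hSdef
  set B : Set ℤ := A ∪ ↑Sfin with hBdef
  have hSmem : ∀ b : ℤ, b ∈ Sfin ↔ ∃ i, i < p ∧ b = sFn i := by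
    intro b
    simp only [hSdef, Finset.mem_image, Finset.mem_range]
    constructor
    · rintro ⟨i, hi, rfl⟩; exact ⟨i, hi, rfl⟩
    · rintro ⟨i, hi, rfl⟩; exact ⟨i, hi, rfl⟩
  have hcne : c ≠ 0 := by omega
  have sidonS : ∀ i j k l : ℕ, i < p → j < p → k < p → l < p →
      sFn i + sFn j = sFn k + sFn l → (i=k∧j=l)∨(i=l∧j=k) := by
    intro i j k l hi hj hk hl hsum
    have h2 : c * ((T + aZ i) + (T + aZ j)) = c * ((T + aZ k) + (T + aZ l)) := by
      simp only [hsdef] at hsum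
      linear_combination hsum
    have h3 := mul_left_cancel₀ hcne h2
    have h1 : aZ i + aZ j = aZ k + aZ l := by linarith
    simp only [haZdef] at h1
    have h4 : (2*p*i + i^2 % p) + (2*p*j + j^2 % p)
        = (2*p*k + k^2 % p) + (2*p*l + l^2 % p) := by exact_mod_cast h1
    exact et_sidon p hpprime (by omega) hi hj hk hl h4
  have hmono : ∀ i j, i < j → j < p → sFn i < sFn j := by
    intro i j hij hjp
    have h2 : i^2 % p < p := Nat.mod_lt _ hp0
    have h6 : 2*p*(i+1) ≤ 2*p*j := Nat.mul_le_mul le_rfl hij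
    rw [Nat.mul_add] at h6
    have h1 : (2*p*i + i^2 % p) < (2*p*j + j^2 % p) := by
      have h7 := Nat.zero_le (j^2 % p)
      linarith
    have h3 : aZ i < aZ j := by simp only [haZdef]; exact_mod_cast h1
    have : c * (T + aZ i) < c * (T + aZ j) :=
      mul_lt_mul_of_pos_left (by linarith) (by omega)
    simpa [hsdef] using this
  have hScard : Sfin.card = p := by
    rw [hSdef, Finset.card_image_of_injOn, Finset.card_range]
    intro i hi j hj hij
    simp only [Finset.coe_range, Set.mem_Iio] at hi hj
    by_contra hne
    rcases lt_or_gt_of_ne hne with h | h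
    · exact absurd hij (ne_of_lt (hmono i j h hj))
    · exact absurd hij.symm (ne_of_lt (hmono j i h hi))
  have hBfin : B.Finite := hA.union Sfin.finite_toSet
  have hABsub : A ⊆ B := Set.subset_union_left
  have hB0 : (0:ℤ) ∉ B := by
    intro h
    rw [hBdef, Set.mem_union] at h
    rcases h with h | h
    · exact hA0 h
    · obtain ⟨i, hi, hie⟩ := (hSmem 0).mp h
      have h1 := hs_lb i
      rw [← hie] at h1
      linarith
  -- the representation bound
  have hrep : ∀ n : ℤ, repFn B n ≤ f n := by
    intro n
    rcases le_or_gt n (2*K) with hn | hn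
    · have hsets : {q : ℤ×ℤ | q.1 ∈ B ∧ q.2 ∈ B ∧ q.1 ≤ q.2 ∧ q.1 + q.2 = n}
          = {q : ℤ×ℤ | q.1 ∈ A ∧ q.2 ∈ A ∧ q.1 ≤ q.2 ∧ q.1 + q.2 = n} := by
        ext ⟨b1, b2⟩
        simp only [Set.mem_setOf_eq]
        constructor
        · rintro ⟨h1, h2, h3, h4⟩
          rw [hBdef, Set.mem_union] at h1 h2
          have hb2A : b2 ∈ A := by
            rcases h2 with h2 | h2
            · exact h2
            · exfalso
              obtain ⟨j, hj, hje⟩ := (hSmem b2).mp h2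
              have hb2 : c*T ≤ b2 := by rw [hje]; exact hs_lb j
              have hb1 : -K ≤ b1 := by
                rcases h1 with h1 | h1
                · have := (abs_le.mp (hKA b1 h1)).1; linarith
                · obtain ⟨i, hi, hie⟩ := (hSmem b1).mp h1
                  have := hs_lb i; rw [← hie] at this; linarith
              linarith
          have hb1A : b1 ∈ A := by
            rcases h1 with h1 | h1
            · exact h1
            · exfalso
              obtain ⟨i, hi, hie⟩ := (hSmem b1).mp h1
              have h5 := hs_lb i
              rw [← hie] at h5
              have h6 := (abs_le.mp (hKA b2 hb2A)).2
              linarith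
          exact ⟨hb1A, hb2A, h3, h4⟩
        · rintro ⟨h1, h2, h3, h4⟩
          exact ⟨hABsub h1, hABsub h2, h3, h4⟩
      calc repFn B n = repFn A n := by simp only [repFn]; rw [hsets]
      _ ≤ f n := hAf n
    · have hfn : 1 ≤ f n := by
        rw [ENat.one_le_iff_ne_zero]
        intro h0
        have h1 := (abs_le.mp (hKF n h0)).2
        linarith
      refine le_trans ?_ hfn
      simp only [repFn]
      rw [Set.encard_le_one_iff]
      rintro ⟨b1, b2⟩ ⟨d1, d2⟩ hb hd
      simp only [Set.mem_setOf_eq] at hb hd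
      obtain ⟨hb1, hb2, hble, hbs⟩ := hb
      obtain ⟨hd1, hd2, hdle, hds⟩ := hd
      have classify : ∀ u v : ℤ, u ∈ B → v ∈ B → u ≤ v → u + v = n →
          (∃ j, j < p ∧ v = sFn j) ∧ (u ∈ A ∨ ∃ i, i < p ∧ u = sFn i) := by
        intro u v hu hv huv hsum
        rw [hBdef, Set.mem_union] at hu hv
        have hvS : ∃ j, j < p ∧ v = sFn j := by
          rcases hv with hv | hv
          · exfalso
            have hvK := (abs_le.mp (hKA v hv)).2
            rcases hu with hu | hu
            · have huK := (abs_le.mp (hKA u hu)).2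
              linarith
            · obtain ⟨i, hi, hie⟩ := (hSmem u).mp hu
              have := hs_lb i; rw [← hie] at this
              linarith
          · exact (hSmem v).mp hv
        refine ⟨hvS, ?_⟩
        rcases hu with hu | hu
        · exact Or.inl hu
        · exact Or.inr ((hSmem u).mp hu)
      obtain ⟨⟨j, hj, hj2⟩, hbc⟩ := classify b1 b2 hb1 hb2 hble hbs
      obtain ⟨⟨l, hl, hl2⟩, hdc⟩ := classify d1 d2 hd1 hd2 hdle hds
      have habs : ∀ a : ℤ, a ∈ A → -K ≤ a ∧ a ≤ K := fun a ha => abs_le.mp (hKA a ha)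
      rcases hbc with hbA | ⟨i, hi, hi2⟩ <;> rcases hdc with hdA | ⟨k, hk, hk2⟩
      · -- both of form (a, s)
        have he : b1 + sFn j = d1 + sFn l := by rw [← hj2, ← hl2, hbs, hds]
        have hdd : c * (aZ j - aZ l) = d1 - b1 := by
          simp only [hsdef] at he; linear_combination he
        have hzz : aZ j = aZ l := by
          by_contra hz
          have h1 : 1 ≤ |aZ j - aZ l| := Int.one_le_abs (sub_ne_zero.mpr hz)
          have h2 : |c * (aZ j - aZ l)| = c * |aZ j - aZ l| := by
            rw [abs_mul, abs_of_pos (by omega : (0:ℤ) < c)]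
          have h3 : c ≤ |d1 - b1| := by
            rw [← hdd, h2]; nlinarith
          obtain ⟨hx1, hx2⟩ := habs b1 hbA
          obtain ⟨hx3, hx4⟩ := habs d1 hdA
          have h4 : |d1 - b1| ≤ 2*K := abs_le.mpr (by constructor <;> linarith)
          linarith
        have hsjl : sFn j = sFn l := by simp only [hsdef, hzz]
        have h5 : b2 = d2 := by rw [hj2, hl2, hsjl]
        have h6 : b1 = d1 := by
          have := hbs; rw [h5] at this; linarith [hds]
        simp [h5, h6]
      · -- (a,s) vs (s,s) : impossible
        exfalso
        have he : b1 + sFn j = sFn k + sFn l := by rw [← hj2, ← hk2, ← hl2, hbs, hds]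
        have h1 := hs_lb k
        have h2 := hs_lb l
        have h3 := hs_ub j hj
        have h4 := (habs b1 hbA).2
        linarith
      · exfalso
        have he : d1 + sFn l = sFn i + sFn j := by rw [← hl2, ← hi2, ← hj2, hds, hbs]
        have h1 := hs_lb i
        have h2 := hs_lb j
        have h3 := hs_ub l hl
        have h4 := (habs d1 hdA).2
        linarith
      · -- both (s,s)
        have he : sFn i + sFn j = sFn k + sFn l := by rw [← hi2, ← hj2, ← hk2, ← hl2, hbs, hds]
        rcases sidonS i j k l hi hj hk hl he with ⟨e1, e2⟩ | ⟨e1, e2⟩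
        · simp [hi2, hj2, hk2, hl2, e1, e2]
        · -- i = l, j = k : then b1 = d2, b2 = d1, order forces equality
          have h5 : b1 = d2 := by rw [hi2, hl2, e1]
          have h6 : b2 = d1 := by rw [hj2, hk2, e2]
          have h7 : b1 = b2 := by
            have := hdle; rw [← h5, ← h6] at this; omega
          simp [Prod.ext_iff]
          constructor
          · rw [← h6, ← h7, h5]
          · rw [← h5, h7, h6]
  -- size and final estimates
  have hNpos : 0 < N := by nlinarith
  set x : ℕ := N.toNat with hxdef
  have hxZ : (x:ℤ) = N := Int.toNat_of_nonneg (le_of_lt hNpos)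
  have hpN : (p:ℤ) ≤ N := by nlinarith
  have hpx : p ≤ x := by
    have : (p:ℤ) ≤ (x:ℤ) := by rw [hxZ]; exact hpN
    exact_mod_cast this
  have hKN : K ≤ N := by nlinarith
  have hBsub : ∀ b ∈ B, -(x:ℤ) ≤ b ∧ b ≤ (x:ℤ) := by
    intro b hb
    rw [hBdef, Set.mem_union] at hb
    rw [hxZ]
    rcases hb with hb | hb
    · obtain ⟨h1, h2⟩ := abs_le.mp (hKA b hb)
      constructor <;> linarith
    · obtain ⟨i, hi, hie⟩ := (hSmem b).mp hb
      have h1 := hs_lb i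
      have h2 := hs_ub i hi
      rw [← hie] at h1 h2
      constructor <;> linarith
  have hcount : countFn B (-(x:ℝ)) (x:ℝ) = B.ncard := by
    simp only [countFn]
    congr 1
    ext a
    simp only [Set.mem_setOf_eq]
    constructor
    · rintro ⟨h, _, _⟩; exact h
    · intro h
      obtain ⟨h1, h2⟩ := hBsub a h
      refine ⟨h, ?_, ?_⟩
      · exact_mod_cast h1
      · exact_mod_cast h2
  have hcard : p ≤ B.ncard := by
    have h1 : (↑Sfin : Set ℤ).ncard ≤ B.ncard := Set.ncard_le_ncard Set.subset_union_right hBfin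
    rwa [Set.ncard_coe_finset, hScard] at h1
  refine ⟨x, B, ?_, hBfin, hB0, hABsub, hrep, ?_⟩
  · have h1 : M ≤ (⌈M⌉₊ : ℝ) := Nat.le_ceil M
    have h2 : ⌈M⌉₊ + 1 ≤ x := le_trans hpM hpx
    have h3 : ((⌈M⌉₊ + 1 : ℕ) : ℝ) ≤ (x:ℝ) := by exact_mod_cast h2
    push_cast at h3
    linarith
  · rw [hcount]
    have hφx : Real.sqrt (Cq:ℝ) + 1 ≤ φ x := hP x (le_trans hpP hpx)
    have hsqC : 0 ≤ Real.sqrt (Cq:ℝ) := Real.sqrt_nonneg _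
    have hφpos : 0 < φ x := by linarith
    have hzNC : N ≤ Cq * (p:ℤ)^2 := by
      rw [hN', hTdef, hCdef]
      nlinarith
    have hxC : (x:ℝ) ≤ (Cq:ℝ) * (p:ℝ)^2 := by
      have h1 : ((x:ℤ):ℝ) ≤ ((Cq * (p:ℤ)^2 : ℤ):ℝ) := by exact_mod_cast (hxZ ▸ hzNC)
      push_cast at h1
      push_cast
      linarith
    have hppos : (0:ℝ) < (p:ℝ) := by exact_mod_cast hp0
    have hsq : Real.sqrt x ≤ Real.sqrt (Cq:ℝ) * p := by
      have h1 := Real.sqrt_le_sqrt hxC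
      rwa [Real.sqrt_mul (by positivity), Real.sqrt_sq (le_of_lt hppos)] at h1
    have hplt : Real.sqrt x / φ x < (p:ℝ) := by
      rw [div_lt_iff₀ hφpos]
      have h1 : (p:ℝ) * (Real.sqrt (Cq:ℝ) + 1) ≤ (p:ℝ) * φ x :=
        mul_le_mul_of_nonneg_left hφx (le_of_lt hppos)
      nlinarith
    calc Real.sqrt x / φ x < (p:ℝ) := hplt
    _ ≤ (B.ncard : ℝ) := by exact_mod_cast hcard
end

section
/- Let φ : ℕ → ℝ be any nonnegative function with φ(x) → ∞ as x → ∞. Then there exists a unique representation basis A for the integers (i.e., r_A(n) = 1 for all integers n) such that A(-x, x) > √x / φ(x) for infinitely many positive integers x. -/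
namespace Stmt8

/-- Sidon-type property: pairwise sums determine the pair. -/
def Good (A : Finset ℤ) : Prop :=
  ∀ a ∈ A, ∀ b ∈ A, ∀ c ∈ A, ∀ d ∈ A, a + b = c + d →
    (a = c ∧ b = d) ∨ (a = d ∧ b = c)

/-- `n` is represented as a sum of two elements of `A`. -/
def FReps (A : Finset ℤ) (n : ℤ) : Prop := ∃ a ∈ A, ∃ b ∈ A, a + b = n

lemma good_empty : Good (∅ : Finset ℤ) := by
  intro a ha; simp at ha

lemma freps_mono {A B : Finset ℤ} (h : A ⊆ B) {n : ℤ} (hn : FReps A n) : FReps B n := by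
  obtain ⟨a, ha, b, hb, hab⟩ := hn
  exact ⟨a, h ha, b, h hb, hab⟩

/-- Adding a far-away pair representing a new `n` preserves goodness. -/
lemma good_insert_pair (A : Finset ℤ) (n H u : ℤ)
    (hH : ∀ a ∈ A, -H ≤ a ∧ a ≤ H) (h0 : 0 ≤ H)
    (hu1 : 3*H + n < u) (hu2 : 3*H - n < u)
    (hS : Good A) (hno : ∀ a ∈ A, ∀ b ∈ A, a + b ≠ n) :
    Good (insert (-u) (insert (n+u) A)) := by
  intro a ha b hb c hc d hd h
  simp only [Finset.mem_insert] at ha hb hc hd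
  rcases ha with rfl | rfl | ha <;> rcases hb with rfl | rfl | hb <;>
    rcases hc with rfl | rfl | hc <;> rcases hd with rfl | rfl | hd
  all_goals try have Ba := hH _ ha
  all_goals try have Bb := hH _ hb
  all_goals try have Bc := hH _ hc
  all_goals try have Bd := hH _ hd
  all_goals try have N1 := hno _ ha _ hb
  all_goals try have N2 := hno _ hc _ hd
  all_goals first
    | omega
    | exact hS _ ha _ hb _ hc _ hd h

/-- Combining two good sets that are well-separated. -/
lemma good_union (A B : Finset ℤ) (H T R D : ℤ)
    (hA : ∀ a ∈ A, -H ≤ a ∧ a ≤ H) (hB : ∀ b ∈ B, T ≤ b ∧ b ≤ T + R)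
    (h0 : 0 ≤ H) (hR : 0 ≤ R) (hT1 : 3*H < T) (hT2 : H + R < T) (hD : 2*H < D)
    (hGA : Good A) (hGB : Good B)
    (hdiff : ∀ x ∈ B, ∀ y ∈ B, x = y ∨ (D ≤ x - y ∨ D ≤ y - x)) :
    Good (A ∪ B) := by
  intro a ha b hb c hc d hd h
  simp only [Finset.mem_union] at ha hb hc hd
  rcases ha with ha | ha <;> rcases hb with hb | hb <;>
    rcases hc with hc | hc <;> rcases hd with hd | hd
  all_goals try exact hGA _ ha _ hb _ hc _ hd h
  all_goals try exact hGB _ ha _ hb _ hc _ hd h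
  all_goals try have Ba := hA _ ha
  all_goals try have Bb := hA _ hb
  all_goals try have Bc := hA _ hc
  all_goals try have Bd := hA _ hd
  all_goals try have Ra := hB _ ha
  all_goals try have Rb := hB _ hb
  all_goals try have Rc := hB _ hc
  all_goals try have Rd := hB _ hd
  all_goals try rcases hdiff _ ha _ hc with h13 | h13
  all_goals try rcases hdiff _ ha _ hd with h14 | h14
  all_goals try rcases hdiff _ hb _ hc with h23 | h23
  all_goals try rcases hdiff _ hb _ hd with h24 | h24
  all_goals omega


/-- Erdős–Turán Sidon set, translated by `T`. -/
noncomputable def sidonSet (p : ℕ) (T : ℤ) : Finset ℤ :=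
  (Finset.range p).image (fun i : ℕ => T + 2*(p:ℤ)*(i:ℤ) + ((i:ℤ)^2 % (p:ℤ)))

lemma sidon_mem_range {p : ℕ} (hp : 0 < p) {T s : ℤ} (hs : s ∈ sidonSet p T) :
    T ≤ s ∧ s ≤ T + 2*(p:ℤ)^2 := by
  obtain ⟨i, hi, rfl⟩ := Finset.mem_image.mp hs
  rw [Finset.mem_range] at hi
  have hP : (0:ℤ) < (p:ℤ) := by exact_mod_cast hp
  have hi0 : (i:ℤ) < (p:ℤ) := by exact_mod_cast hi
  have hi' : (i:ℤ) ≤ (p:ℤ) - 1 := by omega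
  have hq1 : 0 ≤ (i:ℤ)^2 % (p:ℤ) := Int.emod_nonneg _ (by omega)
  have hq2 : (i:ℤ)^2 % (p:ℤ) < (p:ℤ) := Int.emod_lt_of_pos _ hP
  have h1 : 2*(p:ℤ)*(i:ℤ) ≤ 2*(p:ℤ)*((p:ℤ)-1) :=
    mul_le_mul_of_nonneg_left hi' (by omega)
  have h2 : (0:ℤ) ≤ 2*(p:ℤ)*(i:ℤ) := by positivity
  constructor
  · omega
  · nlinarith [sq_nonneg ((p:ℤ))]

lemma sidon_strict {p : ℕ} (hp : 0 < p) (T : ℤ) {i j : ℕ} (hi : i < p) (hj : j < p)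
    (hij : i < j) :
    (T + 2*(p:ℤ)*(i:ℤ) + ((i:ℤ)^2 % (p:ℤ))) + (p:ℤ) + 1
      ≤ T + 2*(p:ℤ)*(j:ℤ) + ((j:ℤ)^2 % (p:ℤ)) := by
  have hP : (0:ℤ) < (p:ℤ) := by exact_mod_cast hp
  have h1 : (i:ℤ) + 1 ≤ (j:ℤ) := by exact_mod_cast hij
  have h2 : 2*(p:ℤ)*((i:ℤ)+1) ≤ 2*(p:ℤ)*(j:ℤ) := mul_le_mul_of_nonneg_left h1 (by omega)
  have hq1 : 0 ≤ (j:ℤ)^2 % (p:ℤ) := Int.emod_nonneg _ (by omega)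
  have hq2 : (i:ℤ)^2 % (p:ℤ) < (p:ℤ) := Int.emod_lt_of_pos _ hP
  have h3 : 2*(p:ℤ)*((i:ℤ)+1) = 2*(p:ℤ)*(i:ℤ) + 2*(p:ℤ) := by ring
  omega

lemma sidon_diff {p : ℕ} (hp : 0 < p) {T : ℤ} :
    ∀ x ∈ sidonSet p T, ∀ y ∈ sidonSet p T, x = y ∨ ((p:ℤ)+1 ≤ x - y ∨ (p:ℤ)+1 ≤ y - x) := by
  intro x hx y hy
  obtain ⟨i, hi, rfl⟩ := Finset.mem_image.mp hx
  obtain ⟨j, hj, rfl⟩ := Finset.mem_image.mp hy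
  rw [Finset.mem_range] at hi hj
  rcases lt_trichotomy i j with h | rfl | h
  · right; right; have := sidon_strict hp T hi hj h; omega
  · left; rfl
  · right; left; have := sidon_strict hp T hj hi h; omega

lemma sidon_card {p : ℕ} (hp : 0 < p) (T : ℤ) : (sidonSet p T).card = p := by
  rw [sidonSet, Finset.card_image_of_injOn, Finset.card_range]
  intro i hi j hj hij
  simp only [Finset.coe_range, Set.mem_Iio] at hi hj
  by_contra hne
  rcases Nat.lt_or_ge i j with h | h
  · have := sidon_strict hp T hi hj h
    have hP : (0:ℤ) < (p:ℤ) := by exact_mod_cast hp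
    simp only at hij
    omega
  · have hij' : j < i := by omega
    have := sidon_strict hp T hj hi hij'
    have hP : (0:ℤ) < (p:ℤ) := by exact_mod_cast hp
    simp only at hij
    omega

lemma sidon_core (P si sj sk sl : ℤ) (hPP : Prime P) (hP2 : 2 < P)
    (bi : 0 ≤ si ∧ si < P) (bj : 0 ≤ sj ∧ sj < P)
    (bk : 0 ≤ sk ∧ sk < P) (bl : 0 ≤ sl ∧ sl < P)
    (h : 2*P*si + si^2 % P + (2*P*sj + sj^2 % P)
        = 2*P*sk + sk^2 % P + (2*P*sl + sl^2 % P)) :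
    (si = sk ∧ sj = sl) ∨ (si = sl ∧ sj = sk) := by
  have hP : (0:ℤ) < P := by omega
  have qib : 0 ≤ si^2 % P ∧ si^2 % P < P := ⟨Int.emod_nonneg _ (by omega), Int.emod_lt_of_pos _ hP⟩
  have qjb : 0 ≤ sj^2 % P ∧ sj^2 % P < P := ⟨Int.emod_nonneg _ (by omega), Int.emod_lt_of_pos _ hP⟩
  have qkb : 0 ≤ sk^2 % P ∧ sk^2 % P < P := ⟨Int.emod_nonneg _ (by omega), Int.emod_lt_of_pos _ hP⟩
  have qlb : 0 ≤ sl^2 % P ∧ sl^2 % P < P := ⟨Int.emod_nonneg _ (by omega), Int.emod_lt_of_pos _ hP⟩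
  have heq : 2*P*(si + sj - sk - sl) = (sk^2 % P + sl^2 % P) - (si^2 % P + sj^2 % P) := by
    linarith [h]
  have hE : si + sj - sk - sl = 0 := by
    have h1 : 2*P*(si + sj - sk - sl) < 2*P*1 := by rw [heq]; omega
    have h2 : 2*P*(-1) < 2*P*(si + sj - sk - sl) := by rw [heq]; omega
    have e1 : si + sj - sk - sl < 1 := lt_of_mul_lt_mul_left h1 (by omega)
    have e2 : -1 < si + sj - sk - sl := lt_of_mul_lt_mul_left h2 (by omega)
    omega
  have hq : si^2 % P + sj^2 % P = sk^2 % P + sl^2 % P := by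
    have h0 : 2*P*(si + sj - sk - sl) = 0 := by rw [hE]; ring
    omega
  have d1 : P * (si^2 / P) + si^2 % P = si^2 := Int.mul_ediv_add_emod _ _
  have d2 : P * (sj^2 / P) + sj^2 % P = sj^2 := Int.mul_ediv_add_emod _ _
  have d3 : P * (sk^2 / P) + sk^2 % P = sk^2 := Int.mul_ediv_add_emod _ _
  have d4 : P * (sl^2 / P) + sl^2 % P = sl^2 := Int.mul_ediv_add_emod _ _
  have hdvd : P ∣ (si^2 + sj^2) - (sk^2 + sl^2) :=
    ⟨(si^2/P + sj^2/P) - (sk^2/P + sl^2/P), by linarith⟩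
  have hsl : sl = si + sj - sk := by omega
  have hfac : (si^2 + sj^2) - (sk^2 + sl^2) = -(2*((sk - si)*(sk - sj))) := by
    rw [hsl]; ring
  have hdvd2 : P ∣ 2*((sk - si)*(sk - sj)) := by
    rw [hfac] at hdvd; exact dvd_neg.mp hdvd
  rcases hPP.dvd_mul.mp hdvd2 with h2' | hfac2
  · exfalso
    have := Int.le_of_dvd (by norm_num) h2'
    omega
  · rcases hPP.dvd_mul.mp hfac2 with hki | hkj
    · have : sk - si = 0 := Int.eq_zero_of_abs_lt_dvd hki (by rw [abs_lt]; omega)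
      left; omega
    · have : sk - sj = 0 := Int.eq_zero_of_abs_lt_dvd hkj (by rw [abs_lt]; omega)
      right; omega

lemma sidon_good {p : ℕ} (hp : p.Prime) (hp2 : 2 < p) (T : ℤ) : Good (sidonSet p T) := by
  intro a ha b hb c hc d hd h
  obtain ⟨i, hi, rfl⟩ := Finset.mem_image.mp ha
  obtain ⟨j, hj, rfl⟩ := Finset.mem_image.mp hb
  obtain ⟨k, hk, rfl⟩ := Finset.mem_image.mp hc
  obtain ⟨l, hl, rfl⟩ := Finset.mem_image.mp hd
  rw [Finset.mem_range] at hi hj hk hl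
  have hPP : Prime ((p:ℤ)) := Nat.prime_iff_prime_int.mp hp
  have hP2 : (2:ℤ) < (p:ℤ) := by exact_mod_cast hp2
  have bi : 0 ≤ (i:ℤ) ∧ (i:ℤ) < (p:ℤ) := ⟨by positivity, by exact_mod_cast hi⟩
  have bj : 0 ≤ (j:ℤ) ∧ (j:ℤ) < (p:ℤ) := ⟨by positivity, by exact_mod_cast hj⟩
  have bk : 0 ≤ (k:ℤ) ∧ (k:ℤ) < (p:ℤ) := ⟨by positivity, by exact_mod_cast hk⟩
  have bl : 0 ≤ (l:ℤ) ∧ (l:ℤ) < (p:ℤ) := ⟨by positivity, by exact_mod_cast hl⟩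
  have h' : 2*(p:ℤ)*(i:ℤ) + (i:ℤ)^2 % (p:ℤ) + (2*(p:ℤ)*(j:ℤ) + (j:ℤ)^2 % (p:ℤ))
      = 2*(p:ℤ)*(k:ℤ) + (k:ℤ)^2 % (p:ℤ) + (2*(p:ℤ)*(l:ℤ) + (l:ℤ)^2 % (p:ℤ)) := by
    linarith [h]
  rcases sidon_core (p:ℤ) (i:ℤ) (j:ℤ) (k:ℤ) (l:ℤ) hPP hP2 bi bj bk bl h' with ⟨e1, e2⟩ | ⟨e1, e2⟩
  · have hik : i = k := by exact_mod_cast e1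
    have hjl : j = l := by exact_mod_cast e2
    subst hik; subst hjl; left; exact ⟨rfl, rfl⟩
  · have hil : i = l := by exact_mod_cast e1
    have hjk : j = k := by exact_mod_cast e2
    subst hil; subst hjk; right; exact ⟨rfl, rfl⟩


noncomputable def supAbs (A : Finset ℤ) : ℕ := A.sup Int.natAbs

lemma supAbs_bound (A : Finset ℤ) : ∀ a ∈ A, -(supAbs A : ℤ) ≤ a ∧ a ≤ (supAbs A : ℤ) := by
  intro a ha
  have : a.natAbs ≤ supAbs A := Finset.le_sup ha
  omega

open Classical in
noncomputable def repStep (A : Finset ℤ) (n : ℤ) : Finset ℤ :=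
  if FReps A n then A else
    insert (-(3*(supAbs A : ℤ) + |n| + 1)) (insert (n + (3*(supAbs A:ℤ) + |n| + 1)) A)

lemma subset_repStep (A : Finset ℤ) (n : ℤ) : A ⊆ repStep A n := by
  unfold repStep; split
  · exact Finset.Subset.refl _
  · intro a ha; simp [Finset.mem_insert, ha]

lemma freps_repStep (A : Finset ℤ) (n : ℤ) : FReps (repStep A n) n := by
  unfold repStep; split
  · assumption
  · exact ⟨-(3*(supAbs A : ℤ) + |n| + 1), by simp, n + (3*(supAbs A:ℤ) + |n| + 1), by simp,
      by ring⟩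

lemma good_repStep {A : Finset ℤ} (hG : Good A) (n : ℤ) : Good (repStep A n) := by
  unfold repStep; split
  · exact hG
  · next hno =>
    rw [FReps] at hno; push_neg at hno
    exact good_insert_pair A n (supAbs A) _ (supAbs_bound A) (by positivity)
      (by have := le_abs_self n; omega) (by have := neg_abs_le n; omega) hG hno

noncomputable def prim (A : Finset ℤ) (k : ℕ) : ℕ :=
  Classical.choose (Nat.exists_infinite_primes (2 * supAbs A + k + 3))

lemma prim_spec (A : Finset ℤ) (k : ℕ) : 2 * supAbs A + k + 3 ≤ prim A k ∧ (prim A k).Prime :=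
  Classical.choose_spec (Nat.exists_infinite_primes (2 * supAbs A + k + 3))

noncomputable def TA (A : Finset ℤ) (k : ℕ) : ℤ :=
  2*(prim A k : ℤ)^2 + 3*(supAbs A : ℤ) + 3

noncomputable def sidonStep (A : Finset ℤ) (k : ℕ) : Finset ℤ :=
  A ∪ sidonSet (prim A k) (TA A k)

lemma good_sidonStep {A : Finset ℤ} (hG : Good A) (k : ℕ) : Good (sidonStep A k) := by
  have hps := prim_spec A k
  have hp0 : 0 < prim A k := hps.2.pos
  have hcast : 2*(supAbs A : ℤ) + (k:ℤ) + 3 ≤ (prim A k : ℤ) := by exact_mod_cast hps.1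
  have hk0 : (0:ℤ) ≤ (k:ℤ) := by positivity
  have hsq : (0:ℤ) ≤ (prim A k : ℤ)^2 := sq_nonneg _
  have hH0 : (0:ℤ) ≤ (supAbs A : ℤ) := by positivity
  exact good_union A _ (supAbs A) (TA A k) (2*(prim A k : ℤ)^2) ((prim A k : ℤ)+1)
    (supAbs_bound A) (fun b hb => sidon_mem_range hp0 hb) hH0 (by positivity)
    (by rw [TA]; omega) (by rw [TA]; omega) (by omega)
    hG (sidon_good hps.2 (by omega) _) (sidon_diff hp0)

noncomputable def e (k : ℕ) : ℤ :=
  if k % 2 = 0 then ((k / 2 : ℕ) : ℤ) else -((k / 2 : ℕ) : ℤ) - 1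

lemma e_surj (n : ℤ) : ∃ k, e k = n := by
  rcases le_or_gt 0 n with h | h
  · refine ⟨2 * n.toNat, ?_⟩
    rw [e, if_pos (by omega)]
    omega
  · refine ⟨2 * (-n-1).toNat + 1, ?_⟩
    rw [e, if_neg (by omega)]
    omega

noncomputable def seqA : ℕ → Finset ℤ
  | 0 => ∅
  | k+1 => sidonStep (repStep (seqA k) (e k)) k

lemma seqA_subset_succ (k : ℕ) : seqA k ⊆ seqA (k+1) := by
  intro a ha
  show a ∈ sidonStep (repStep (seqA k) (e k)) k
  exact Finset.mem_union_left _ (subset_repStep _ _ ha)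

lemma seqA_mono {j k : ℕ} (h : j ≤ k) : seqA j ⊆ seqA k := by
  induction k with
  | zero =>
    have : j = 0 := by omega
    subst this; exact Finset.Subset.refl _
  | succ k ih =>
    rcases Nat.lt_or_ge j (k+1) with h' | h'
    · exact (ih (by omega)).trans (seqA_subset_succ k)
    · have : j = k+1 := by omega
      subst this; exact Finset.Subset.refl _

lemma seqA_good (k : ℕ) : Good (seqA k) := by
  induction k with
  | zero => exact good_empty
  | succ k ih => exact good_sidonStep (good_repStep ih (e k)) k

lemma seqA_reps (k : ℕ) : FReps (seqA (k+1)) (e k) :=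
  freps_mono Finset.subset_union_left (freps_repStep (seqA k) (e k))

noncomputable def Aset : Set ℤ := ⋃ k, (seqA k : Set ℤ)

lemma mem_Aset {a : ℤ} : a ∈ Aset ↔ ∃ k, a ∈ seqA k := by simp [Aset]

lemma Aset_good {a b c d : ℤ} (ha : a ∈ Aset) (hb : b ∈ Aset) (hc : c ∈ Aset)
    (hd : d ∈ Aset) (h : a + b = c + d) :
    (a = c ∧ b = d) ∨ (a = d ∧ b = c) := by
  obtain ⟨ka, ha⟩ := mem_Aset.mp ha
  obtain ⟨kb, hb⟩ := mem_Aset.mp hb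
  obtain ⟨kc, hc⟩ := mem_Aset.mp hc
  obtain ⟨kd, hd⟩ := mem_Aset.mp hd
  exact seqA_good (max (max ka kb) (max kc kd))
    _ (seqA_mono (by omega) ha) _ (seqA_mono (by omega) hb)
    _ (seqA_mono (by omega) hc) _ (seqA_mono (by omega) hd) h

lemma repFn_Aset (n : ℤ) : repFn Aset n = 1 := by
  obtain ⟨k, hk⟩ := e_surj n
  have hrep : FReps (seqA (k+1)) n := hk ▸ seqA_reps k
  obtain ⟨a, ha, b, hb, hab⟩ := hrep
  have haA : a ∈ Aset := mem_Aset.mpr ⟨k+1, ha⟩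
  have hbA : b ∈ Aset := mem_Aset.mpr ⟨k+1, hb⟩
  have hminA : min a b ∈ Aset := by rcases min_choice a b with h | h <;> rw [h] <;> assumption
  have hmaxA : max a b ∈ Aset := by rcases max_choice a b with h | h <;> rw [h] <;> assumption
  have hmem : (min a b, max a b) ∈
      {p : ℤ × ℤ | p.1 ∈ Aset ∧ p.2 ∈ Aset ∧ p.1 ≤ p.2 ∧ p.1 + p.2 = n} :=
    ⟨hminA, hmaxA, min_le_max, by rw [min_add_max]; exact hab⟩
  rw [repFn, Set.encard_eq_one]
  refine ⟨(min a b, max a b), ?_⟩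
  ext ⟨c, d⟩
  simp only [Set.mem_setOf_eq, Set.mem_singleton_iff]
  constructor
  · rintro ⟨hc, hd, hcd, hsum⟩
    have hsum' : c + d = min a b + max a b := by rw [min_add_max]; omega
    rcases Aset_good hc hd hminA hmaxA hsum' with ⟨e1, e2⟩ | ⟨e1, e2⟩
    · rw [Prod.mk.injEq]; exact ⟨e1, e2⟩
    · have hle : min a b ≤ max a b := min_le_max
      rw [Prod.mk.injEq]; constructor <;> omega
  · rintro h
    rw [Prod.mk.injEq] at h
    obtain ⟨h1, h2⟩ := h
    subst h1; subst h2; exact hmem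

lemma count_ge (x : ℕ) (F : Finset ℤ) (hF : ∀ s ∈ F, s ∈ Aset ∧ 0 ≤ s ∧ s ≤ (x:ℤ)) :
    F.card ≤ countFn Aset (-(x:ℝ)) (x:ℝ) := by
  have hsub : (↑F : Set ℤ) ⊆
      {a : ℤ | a ∈ Aset ∧ -(x:ℝ) ≤ (a:ℝ) ∧ (a:ℝ) ≤ (x:ℝ)} := by
    intro s hs
    rw [Finset.mem_coe] at hs
    obtain ⟨h1, h2, h3⟩ := hF s hs
    refine ⟨h1, ?_, ?_⟩
    · have e1 : (0:ℝ) ≤ (s:ℝ) := by exact_mod_cast h2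
      have e2 : (0:ℝ) ≤ (x:ℝ) := by positivity
      linarith
    · exact_mod_cast h3
  have hfin : {a : ℤ | a ∈ Aset ∧ -(x:ℝ) ≤ (a:ℝ) ∧ (a:ℝ) ≤ (x:ℝ)}.Finite := by
    apply Set.Finite.subset (Set.finite_Icc (-(x:ℤ)) (x:ℤ))
    rintro a ⟨-, h1, h2⟩
    rw [Set.mem_Icc]
    have e1 : ((-(x:ℤ) : ℤ):ℝ) ≤ (a:ℝ) := by push_cast; linarith
    have e2 : (a:ℝ) ≤ (((x:ℤ)):ℝ) := by push_cast; linarith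
    exact ⟨by exact_mod_cast e1, by exact_mod_cast e2⟩
  have hcard := Set.ncard_le_ncard hsub hfin
  rwa [Set.ncard_coe_finset] at hcard

lemma count_stage (k : ℕ) : ∃ x q : ℕ, k ≤ x ∧ 0 < x ∧ 0 < q ∧ x ≤ 9*(q*q) ∧
    q ≤ countFn Aset (-(x:ℝ)) (x:ℝ) := by
  have hps := prim_spec (repStep (seqA k) (e k)) k
  set B := repStep (seqA k) (e k) with hB
  set p := prim B k with hp
  set h := supAbs B with hh
  have hp0 : 0 < p := hps.2.pos
  have hple : 2*h + k + 3 ≤ p := hps.1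
  have hpp : p ≤ p*p := Nat.le_mul_of_pos_left p hp0
  refine ⟨4*(p*p) + 3*h + 3, p, by omega, by omega, hp0, by omega, ?_⟩
  have hTx : TA B k + 2*(p:ℤ)^2 = ((4*(p*p) + 3*h + 3 : ℕ):ℤ) := by
    rw [TA]; push_cast; ring
  have hT0 : (0:ℤ) ≤ TA B k := by rw [TA]; positivity
  have hcard : (sidonSet p (TA B k)).card = p := sidon_card hp0 _
  have main : (sidonSet p (TA B k)).card ≤
      countFn Aset (-((4*(p*p) + 3*h + 3 : ℕ):ℝ)) ((4*(p*p) + 3*h + 3 : ℕ):ℝ) := by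
    apply count_ge
    intro s hs
    have hrange := sidon_mem_range hp0 hs
    have hSsub : sidonSet p (TA B k) ⊆ seqA (k+1) := by
      show sidonSet p (TA B k) ⊆ sidonStep B k
      exact Finset.subset_union_right
    exact ⟨mem_Aset.mpr ⟨k+1, hSsub hs⟩, by omega, by omega⟩
  rwa [hcard] at main

end Stmt8

theorem stmt_8 (φ : ℕ → ℝ) (hφ0 : ∀ x, 0 ≤ φ x)
    (hφ : Filter.Tendsto φ Filter.atTop Filter.atTop) :
    ∃ A : Set ℤ, (∀ n : ℤ, repFn A n = 1) ∧
      {x : ℕ | 0 < x ∧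
        Real.sqrt x / φ x < (countFn A (-(x : ℝ)) (x : ℝ) : ℝ)}.Infinite := by
  refine ⟨Stmt8.Aset, Stmt8.repFn_Aset, ?_⟩
  set S := {x : ℕ | 0 < x ∧
      Real.sqrt x / φ x < (countFn Stmt8.Aset (-(x : ℝ)) (x : ℝ) : ℝ)} with hS
  have key : ∀ N : ℕ, ∃ x ∈ S, N ≤ x := by
    intro N
    obtain ⟨M, hM⟩ := Filter.eventually_atTop.mp (hφ.eventually_ge_atTop 4)
    obtain ⟨x, q, hkx, hx0, hq0, hxq, hcount⟩ := Stmt8.count_stage (max N M + 1)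
    have hxN : N ≤ x := by omega
    have hxM : M ≤ x := by omega
    have hφ4 : (4:ℝ) ≤ φ x := hM x hxM
    have hsx : (0:ℝ) < Real.sqrt x := Real.sqrt_pos.mpr (by exact_mod_cast hx0)
    have hxq' : (x:ℝ) ≤ ((9*(q*q) : ℕ):ℝ) := by exact_mod_cast hxq
    have hsq : Real.sqrt x ≤ 3*(q:ℝ) := by
      have h1 := Real.sqrt_le_sqrt hxq'
      have h2 : Real.sqrt ((9*(q*q) : ℕ):ℝ) = 3*(q:ℝ) := by
        push_cast
        rw [show (9:ℝ)*((q:ℝ)*(q:ℝ)) = (3*(q:ℝ))^2 by ring]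
        exact Real.sqrt_sq (by positivity)
      rw [h2] at h1
      exact h1
    have hqcount : (q:ℝ) ≤ (countFn Stmt8.Aset (-(x:ℝ)) (x:ℝ) : ℝ) := by exact_mod_cast hcount
    refine ⟨x, ⟨hx0, ?_⟩, hxN⟩
    have step1 : Real.sqrt x / φ x ≤ Real.sqrt x / 4 := by
      apply div_le_div_of_nonneg_left (Real.sqrt_nonneg _) (by norm_num) hφ4
    have step2 : Real.sqrt x / 4 < Real.sqrt x / 3 := by
      apply div_lt_div_of_pos_left hsx (by norm_num) (by norm_num)
    have step3 : Real.sqrt x / 3 ≤ (q:ℝ) := by linarith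
    linarith
  by_contra hfin
  rw [Set.not_infinite] at hfin
  obtain ⟨M, hM⟩ := hfin.bddAbove
  obtain ⟨x, hx, hge⟩ := key (M+1)
  have := hM hx
  omega
end

section
/- Let A be a finite set of integers with 0 ∉ A, let d be a positive integer with |a| ≤ d for all a ∈ A, and let u be an integer with |u| ≤ d. Let c be an integer with c > 4d if u ≥ 0 and c < -4d if u < 0, and set B = A ∪ {-c, c + u}. Then r_B(u) = r_A(u) + 1; r_B(n) = r_A(n) for every n ∈ 2A with n ≠ u; and r_B(n) = 1 for every n ∈ 2B with n ∉ 2A ∪ {u}. -/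
open Pointwise

theorem stmt_10 (A : Set ℤ) (hA : A.Finite) (hA0 : (0 : ℤ) ∉ A)
    (d : ℤ) (hd : 0 < d) (hAd : ∀ a ∈ A, |a| ≤ d)
    (u : ℤ) (hu : |u| ≤ d)
    (c : ℤ) (hc1 : 0 ≤ u → 4 * d < c) (hc2 : u < 0 → c < -(4 * d))
    (B : Set ℤ) (hB : B = A ∪ ({-c, c + u} : Set ℤ)) :
    repFn B u = repFn A u + 1 ∧
    (∀ n ∈ A + A, n ≠ u → repFn B n = repFn A n) ∧
    (∀ n ∈ B + B, n ∉ (A + A) ∪ ({u} : Set ℤ) → repFn B n = 1) := by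
  have hu' := abs_le.mp hu
  set e : ℤ := -c with he_def
  set f : ℤ := c + u with hf_def
  have hef : e + f = u := by omega
  have hcase : (e < -(4*d) ∧ 3*d < f) ∨ (4*d < e ∧ f < -(3*d)) := by
    rcases le_or_gt 0 u with h | h
    · have := hc1 h; left; omega
    · have := hc2 h; right; omega
  have hbd : ∀ a ∈ A, -d ≤ a ∧ a ≤ d := fun a ha => abs_le.mp (hAd a ha)
  have heA : e ∉ A := fun h => by have := hbd e h; omega
  have hfA : f ∉ A := fun h => by have := hbd f h; omega
  have hBmem : ∀ x, x ∈ B ↔ x ∈ A ∨ x = e ∨ x = f := by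
    intro x
    rw [hB]
    simp only [Set.mem_union, Set.mem_insert_iff, Set.mem_singleton_iff]
  have heB : e ∈ B := (hBmem e).mpr (Or.inr (Or.inl rfl))
  have hfB : f ∈ B := (hBmem f).mpr (Or.inr (Or.inr rfl))
  have hAB : ∀ x ∈ A, x ∈ B := fun x hx => (hBmem x).mpr (Or.inl hx)
  refine ⟨?_, ?_, ?_⟩
  · -- Part 1 : repFn B u = repFn A u + 1
    have hset : {p : ℤ × ℤ | p.1 ∈ B ∧ p.2 ∈ B ∧ p.1 ≤ p.2 ∧ p.1 + p.2 = u}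
        = insert (min e f, max e f)
            {p : ℤ × ℤ | p.1 ∈ A ∧ p.2 ∈ A ∧ p.1 ≤ p.2 ∧ p.1 + p.2 = u} := by
      ext ⟨x, y⟩
      simp only [Set.mem_setOf_eq, Set.mem_insert_iff]
      constructor
      · rintro ⟨hx, hy, hxy, hsum⟩
        rcases (hBmem x).mp hx with hx' | hx' | hx' <;>
          rcases (hBmem y).mp hy with hy' | hy' | hy'
        · exact Or.inr ⟨hx', hy', hxy, hsum⟩
        · exfalso; have := hbd x hx'; omega
        · exfalso; have := hbd x hx'; omega
        · exfalso; have := hbd y hy'; omega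
        · exfalso; omega
        · subst hx'; subst hy'
          left
          rw [min_eq_left hxy, max_eq_right hxy]
        · exfalso; have := hbd y hy'; omega
        · subst hx'; subst hy'
          left
          rw [min_eq_right hxy, max_eq_left hxy]
        · exfalso; omega
      · rintro (hp | ⟨hx, hy, hxy, hsum⟩)
        · rw [Prod.ext_iff] at hp
          obtain ⟨h1, h2⟩ := hp
          simp only at h1 h2
          subst h1; subst h2
          have hmin : min e f ∈ B := by
            rcases le_total e f with h | h
            · rw [min_eq_left h]; exact heB
            · rw [min_eq_right h]; exact hfB
          have hmax : max e f ∈ B := by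
            rcases le_total e f with h | h
            · rw [max_eq_right h]; exact hfB
            · rw [max_eq_left h]; exact heB
          exact ⟨hmin, hmax, min_le_max, by rw [min_add_max]; omega⟩
        · exact ⟨hAB x hx, hAB y hy, hxy, hsum⟩
    have hnot : (min e f, max e f) ∉
        {p : ℤ × ℤ | p.1 ∈ A ∧ p.2 ∈ A ∧ p.1 ≤ p.2 ∧ p.1 + p.2 = u} := by
      intro h
      have h1 := h.1
      simp only at h1
      rcases le_total e f with hle | hle
      · rw [min_eq_left hle] at h1; exact heA h1
      · rw [min_eq_right hle] at h1; exact hfA h1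
    rw [repFn, repFn, hset, Set.encard_insert_of_notMem hnot]
  · -- Part 2 : repFn B n = repFn A n for n ∈ A + A, n ≠ u
    intro n hn hnu
    rw [Set.mem_add] at hn
    obtain ⟨a, ha, b, hb, hab⟩ := hn
    have ha' := hbd a ha
    have hb' := hbd b hb
    have hset : {p : ℤ × ℤ | p.1 ∈ B ∧ p.2 ∈ B ∧ p.1 ≤ p.2 ∧ p.1 + p.2 = n}
        = {p : ℤ × ℤ | p.1 ∈ A ∧ p.2 ∈ A ∧ p.1 ≤ p.2 ∧ p.1 + p.2 = n} := by
      ext ⟨x, y⟩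
      simp only [Set.mem_setOf_eq]
      constructor
      · rintro ⟨hx, hy, hxy, hsum⟩
        rcases (hBmem x).mp hx with hx' | hx' | hx' <;>
          rcases (hBmem y).mp hy with hy' | hy' | hy'
        · exact ⟨hx', hy', hxy, hsum⟩
        · exfalso; have := hbd x hx'; omega
        · exfalso; have := hbd x hx'; omega
        · exfalso; have := hbd y hy'; omega
        · exfalso; omega
        · exfalso; omega
        · exfalso; have := hbd y hy'; omega
        · exfalso; omega
        · exfalso; omega
      · rintro ⟨hx, hy, hxy, hsum⟩
        exact ⟨hAB x hx, hAB y hy, hxy, hsum⟩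
    rw [repFn, repFn, hset]
  · -- Part 3 : repFn B n = 1 for n ∈ B + B, n ∉ (A + A) ∪ {u}
    intro n hn hn'
    simp only [Set.mem_union, Set.mem_singleton_iff, not_or] at hn'
    obtain ⟨hnAA, hnu⟩ := hn'
    rw [Set.mem_add] at hn
    obtain ⟨x, hx, y, hy, hxy⟩ := hn
    have hsrc : (n - e ∈ A) ∨ (n - f ∈ A) ∨ n = 2*e ∨ n = 2*f := by
      rcases (hBmem x).mp hx with hx' | hx' | hx' <;>
        rcases (hBmem y).mp hy with hy' | hy' | hy'
      · exact absurd (hxy ▸ Set.add_mem_add hx' hy') hnAA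
      · left; subst hy'; have : n - e = x := by omega
        rw [this]; exact hx'
      · right; left; subst hy'; have : n - f = x := by omega
        rw [this]; exact hx'
      · left; subst hx'; have : n - e = y := by omega
        rw [this]; exact hy'
      · right; right; left; omega
      · exact absurd (by omega : n = u) hnu
      · right; left; subst hx'; have : n - f = y := by omega
        rw [this]; exact hy'
      · exact absurd (by omega : n = u) hnu
      · right; right; right; omega
    have hone : ∃ q : ℤ × ℤ,
        {p : ℤ × ℤ | p.1 ∈ B ∧ p.2 ∈ B ∧ p.1 ≤ p.2 ∧ p.1 + p.2 = n} = {q} := by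
      rcases hsrc with ha | ha | ha | ha
      · -- n - e ∈ A
        have ha' := hbd _ ha
        refine ⟨(min (n - e) e, max (n - e) e), ?_⟩
        ext ⟨p1, p2⟩
        simp only [Set.mem_setOf_eq, Set.mem_singleton_iff, Prod.ext_iff]
        constructor
        · rintro ⟨h1, h2, h12, hs⟩
          rcases (hBmem p1).mp h1 with h1' | h1' | h1' <;>
            rcases (hBmem p2).mp h2 with h2' | h2' | h2'
          · exact absurd (hs ▸ Set.add_mem_add h1' h2') hnAA
          · subst h2'
            have hp1 : p1 = n - e := by omega
            subst hp1
            rw [min_eq_left h12, max_eq_right h12]; exact ⟨rfl, rfl⟩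
          · exfalso; subst h2'; have := hbd p1 h1'; omega
          · subst h1'
            have hp2 : p2 = n - e := by omega
            subst hp2
            rw [min_eq_right h12, max_eq_left h12]; exact ⟨rfl, rfl⟩
          · exfalso; omega
          · exact absurd (by omega : n = u) hnu
          · exfalso; subst h1'; have := hbd p2 h2'; omega
          · exact absurd (by omega : n = u) hnu
          · exfalso; omega
        · rintro ⟨h1, h2⟩
          subst h1; subst h2
          have hmin : min (n - e) e ∈ B := by
            rcases le_total (n - e) e with h | h
            · rw [min_eq_left h]; exact hAB _ ha
            · rw [min_eq_right h]; exact heB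
          have hmax : max (n - e) e ∈ B := by
            rcases le_total (n - e) e with h | h
            · rw [max_eq_right h]; exact heB
            · rw [max_eq_left h]; exact hAB _ ha
          exact ⟨hmin, hmax, min_le_max, by rw [min_add_max]; omega⟩
      · -- n - f ∈ A
        have ha' := hbd _ ha
        refine ⟨(min (n - f) f, max (n - f) f), ?_⟩
        ext ⟨p1, p2⟩
        simp only [Set.mem_setOf_eq, Set.mem_singleton_iff, Prod.ext_iff]
        constructor
        · rintro ⟨h1, h2, h12, hs⟩
          rcases (hBmem p1).mp h1 with h1' | h1' | h1' <;>
            rcases (hBmem p2).mp h2 with h2' | h2' | h2'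
          · exact absurd (hs ▸ Set.add_mem_add h1' h2') hnAA
          · exfalso; subst h2'; have := hbd p1 h1'; omega
          · subst h2'
            have hp1 : p1 = n - f := by omega
            subst hp1
            rw [min_eq_left h12, max_eq_right h12]; exact ⟨rfl, rfl⟩
          · exfalso; have := hbd p2 h2'; omega
          · exfalso; omega
          · exact absurd (by omega : n = u) hnu
          · subst h1'
            have hp2 : p2 = n - f := by omega
            subst hp2
            rw [min_eq_right h12, max_eq_left h12]; exact ⟨rfl, rfl⟩
          · exact absurd (by omega : n = u) hnu
          · exfalso; omega
        · rintro ⟨h1, h2⟩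
          subst h1; subst h2
          have hmin : min (n - f) f ∈ B := by
            rcases le_total (n - f) f with h | h
            · rw [min_eq_left h]; exact hAB _ ha
            · rw [min_eq_right h]; exact hfB
          have hmax : max (n - f) f ∈ B := by
            rcases le_total (n - f) f with h | h
            · rw [max_eq_right h]; exact hfB
            · rw [max_eq_left h]; exact hAB _ ha
          exact ⟨hmin, hmax, min_le_max, by rw [min_add_max]; omega⟩
      · -- n = 2e
        refine ⟨(e, e), ?_⟩
        ext ⟨p1, p2⟩
        simp only [Set.mem_setOf_eq, Set.mem_singleton_iff, Prod.ext_iff]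
        constructor
        · rintro ⟨h1, h2, h12, hs⟩
          rcases (hBmem p1).mp h1 with h1' | h1' | h1' <;>
            rcases (hBmem p2).mp h2 with h2' | h2' | h2'
          · exact absurd (hs ▸ Set.add_mem_add h1' h2') hnAA
          · exfalso; have := hbd p1 h1'; omega
          · exfalso; have := hbd p1 h1'; omega
          · exfalso; have := hbd p2 h2'; omega
          · exact ⟨h1', h2'⟩
          · exact absurd (by omega : n = u) hnu
          · exfalso; have := hbd p2 h2'; omega
          · exact absurd (by omega : n = u) hnu
          · exfalso; omega
        · rintro ⟨h1, h2⟩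
          subst h1; subst h2
          exact ⟨heB, heB, le_refl e, by omega⟩
      · -- n = 2f
        refine ⟨(f, f), ?_⟩
        ext ⟨p1, p2⟩
        simp only [Set.mem_setOf_eq, Set.mem_singleton_iff, Prod.ext_iff]
        constructor
        · rintro ⟨h1, h2, h12, hs⟩
          rcases (hBmem p1).mp h1 with h1' | h1' | h1' <;>
            rcases (hBmem p2).mp h2 with h2' | h2' | h2'
          · exact absurd (hs ▸ Set.add_mem_add h1' h2') hnAA
          · exfalso; have := hbd p1 h1'; omega
          · exfalso; have := hbd p1 h1'; omega
          · exfalso; have := hbd p2 h2'; omega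
          · exfalso; omega
          · exact absurd (by omega : n = u) hnu
          · exfalso; have := hbd p2 h2'; omega
          · exact absurd (by omega : n = u) hnu
          · exact ⟨h1', h2'⟩
        · rintro ⟨h1, h2⟩
          subst h1; subst h2
          exact ⟨hfB, hfB, le_refl f, by omega⟩
    obtain ⟨q, hq⟩ := hone
    rw [repFn, hq, Set.encard_singleton]
end
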